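/- arXiv:1705.00826 — 3 statements merged into one kernel-verified Lean document; each statement's English description precedes it below -/
import Mathlib

section
/- Let G = (V,E) be a finite simple graph with no isolated vertices. A vertex v ∈ V is an essential vertex of G (i.e., D_t(G∖v,x) is the zero polynomial) if and only if v is a support vertex of G. -/
open Polynomial

/-- `D` is a total dominating set of `G`: every vertex has a neighbor in `D`. -/
def SimpleGraph.IsTDS {V : Type*} (G : SimpleGraph V) (D : Finset V) : Prop :=
  ∀ v, ∃ u ∈ D, G.Adj v u

/-- `d_t(G,i)`: the number of total dominating sets of `G` of cardinality `i`. -/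
noncomputable def SimpleGraph.dt {V : Type*} [Fintype V] (G : SimpleGraph V) (i : ℕ) : ℕ :=
  Set.ncard {D : Finset V | D.card = i ∧ G.IsTDS D}

/-- The total domination polynomial `D_t(G,x) = Σ_{i=1}^{n} d_t(G,i) xⁱ` (over `ℂ`). -/
noncomputable def SimpleGraph.DtPoly {V : Type*} [Fintype V] (G : SimpleGraph V) :
    Polynomial ℂ :=
  ∑ i ∈ Finset.Icc 1 (Fintype.card V), Polynomial.C (G.dt i : ℂ) * Polynomial.X ^ i

/-- `w` is a support vertex of `G`: it is adjacent to a leaf (a vertex of degree one). -/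
def SimpleGraph.IsSupportVertex {V : Type*} (G : SimpleGraph V) (w : V) : Prop :=
  ∃ l, G.Adj w l ∧ G.neighborSet l = {w}

/-- The total domination number: minimum cardinality of a total dominating set. -/
noncomputable def SimpleGraph.gammaT {V : Type*} [Fintype V] (G : SimpleGraph V) : ℕ :=
  sInf {i | ∃ D : Finset V, D.card = i ∧ G.IsTDS D}

/-! A graph has a total dominating set iff it has no isolated vertex (then the whole vertex set
is one), and `D_t` vanishes exactly when there is none. Since `G` has no isolated vertices,
deleting `v` isolates a vertex `w` exactly when `v` is the only neighbour of `w`, i.e. `w` is a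
leaf hanging at `v`. -/

namespace SimpleGraph

variable {W : Type*}

theorem IsTDS.nonempty [Nonempty W] {H : SimpleGraph W} {D : Finset W} (hD : H.IsTDS D) :
    D.Nonempty :=
  let ⟨_, hu, _⟩ := hD (Classical.arbitrary W)
  ⟨_, hu⟩

theorem exists_isTDS_iff [Fintype W] (H : SimpleGraph W) :
    (∃ D, H.IsTDS D) ↔ ∀ w, ∃ u, H.Adj w u := by
  refine ⟨fun ⟨D, hD⟩ w => (hD w).imp fun _ => And.right, fun h => ⟨Finset.univ, fun w => ?_⟩⟩
  obtain ⟨u, hu⟩ := h w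
  exact ⟨u, Finset.mem_univ u, hu⟩

theorem dt_card_pos [Fintype W] {H : SimpleGraph W} {D : Finset W} (hD : H.IsTDS D) :
    0 < H.dt D.card :=
  (Set.ncard_pos (Set.toFinite _)).mpr ⟨D, rfl, hD⟩

theorem dt_eq_zero_of_not_exists_isTDS [Fintype W] {H : SimpleGraph W} (h : ¬∃ D, H.IsTDS D)
    (i : ℕ) : H.dt i = 0 := by
  rw [dt, Set.ncard_eq_zero]
  exact Set.eq_empty_of_forall_notMem fun D hD => h ⟨D, hD.2⟩

theorem coeff_dtPoly [Fintype W] (H : SimpleGraph W) {i : ℕ}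
    (hi : i ∈ Finset.Icc 1 (Fintype.card W)) :
    H.DtPoly.coeff i = H.dt i := by
  simp only [DtPoly, finsetSum_coeff, coeff_C_mul, coeff_X_pow, mul_ite, mul_one, mul_zero,
    Finset.sum_ite_eq, if_pos hi]

theorem dtPoly_eq_zero_iff [Fintype W] [Nonempty W] (H : SimpleGraph W) :
    H.DtPoly = 0 ↔ ¬∃ D, H.IsTDS D := by
  refine ⟨fun h0 ⟨D, hD⟩ => ?_, fun h => Finset.sum_eq_zero fun i _ => ?_⟩
  · have hcard : D.card ∈ Finset.Icc 1 (Fintype.card W) :=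
      Finset.mem_Icc.mpr ⟨hD.nonempty.card_pos, D.card_le_univ⟩
    have hcoeff := H.coeff_dtPoly hcard
    rw [h0, coeff_zero, eq_comm, Nat.cast_eq_zero] at hcoeff
    exact (dt_card_pos hD).ne' hcoeff
  · rw [dt_eq_zero_of_not_exists_isTDS h, Nat.cast_zero, C_0, zero_mul]

theorem isSupportVertex_iff_exists_isolated_induce {G : SimpleGraph W}
    (h : ∀ w, ∃ u, G.Adj w u) (v : W) :
    G.IsSupportVertex v ↔ ∃ w : {u | u ≠ v}, ∀ u, ¬(G.induce {u | u ≠ v}).Adj w u := by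
  constructor
  · rintro ⟨l, hvl, hl⟩
    refine ⟨⟨l, hvl.ne'⟩, fun u hlu => u.2 ?_⟩
    have hu : u.1 ∈ G.neighborSet l := hlu
    rwa [hl] at hu
  · rintro ⟨w, hw⟩
    have hnbr : ∀ x, G.Adj w x → x = v := fun x hx => by_contra fun hxv => hw ⟨x, hxv⟩ hx
    obtain ⟨u, hu⟩ := h w
    obtain rfl := hnbr u hu
    refine ⟨w, hu.symm, Set.ext fun x => ⟨hnbr x, ?_⟩⟩
    rintro rfl
    exact hu

end SimpleGraph

/-- In a graph with no isolated vertices, a vertex `v` is essential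
(`D_t(G∖v, x) = 0`) if and only if `v` is a support vertex of `G`. -/
theorem stmt_7 {V : Type*} [Fintype V] [DecidableEq V] (G : SimpleGraph V)
    (h : ∀ v, ∃ u, G.Adj v u) (v : V) :
    (G.induce {u | u ≠ v}).DtPoly = 0 ↔ G.IsSupportVertex v := by
  obtain ⟨u, hvu⟩ := h v
  have : Nonempty {u | u ≠ v} := ⟨⟨u, hvu.ne'⟩⟩
  rw [SimpleGraph.dtPoly_eq_zero_iff, SimpleGraph.exists_isTDS_iff,
    SimpleGraph.isSupportVertex_iff_exists_isolated_induce h]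
  simp only [not_forall, not_exists]
end

section
/- Let G = (V,E) be a finite simple graph and let v be a support vertex of G. Then D_t(G,x) = D_t(G⊙v,x), where G⊙v is the graph obtained from G by removing all edges joining two vertices of N(v). -/
/-! The leaf adjacent to `v` can only be dominated by `v`, so `v` lies in every total dominating
set `D`. A vertex whose dominator in `D` is joined to it by a deleted edge lies in `N(v)`, so `v`
still dominates it in `G⊙v`. Hence `G` and `G⊙v` have the same total dominating sets. -/

open Polynomial

namespace SimpleGraph

variable {V : Type*} {G H : SimpleGraph V} {D : Finset V} {v : V}

theorem IsTDS.mono (hGH : G ≤ H) (hD : G.IsTDS D) : H.IsTDS D :=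
  fun x => (hD x).imp fun _ ⟨hu, hxu⟩ => ⟨hu, hGH hxu⟩

theorem IsSupportVertex.mem_of_isTDS (hv : G.IsSupportVertex v) (hD : G.IsTDS D) : v ∈ D := by
  obtain ⟨l, -, hl⟩ := hv
  obtain ⟨u, hu, hlu⟩ := hD l
  have hu_eq : u ∈ G.neighborSet l := hlu
  rw [hl, Set.mem_singleton_iff] at hu_eq
  exact hu_eq ▸ hu

theorem IsTDS.deleteEdges_adj_neighborSet (hD : G.IsTDS D) (hv : v ∈ D) :
    (G.deleteEdges {e | ∀ x ∈ e, G.Adj v x}).IsTDS D := by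
  intro x
  obtain ⟨u, hu, hxu⟩ := hD x
  by_cases hxu_nbhd : G.Adj v x ∧ G.Adj v u
  · refine ⟨v, hv, deleteEdges_adj.2 ⟨hxu_nbhd.1.symm, fun hall => ?_⟩⟩
    exact G.irrefl (hall v (Sym2.mem_mk_right x v))
  · refine ⟨u, hu, deleteEdges_adj.2 ⟨hxu, fun hall => hxu_nbhd ?_⟩⟩
    exact ⟨hall x (Sym2.mem_mk_left x u), hall u (Sym2.mem_mk_right x u)⟩

theorem IsSupportVertex.isTDS_deleteEdges_adj_iff (hv : G.IsSupportVertex v) :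
    (G.deleteEdges {e | ∀ x ∈ e, G.Adj v x}).IsTDS D ↔ G.IsTDS D :=
  ⟨IsTDS.mono (deleteEdges_le _), fun hD => hD.deleteEdges_adj_neighborSet (hv.mem_of_isTDS hD)⟩

theorem dtPoly_congr [Fintype V] (h : ∀ D, G.IsTDS D ↔ H.IsTDS D) : G.DtPoly = H.DtPoly := by
  have hdt : ∀ i, G.dt i = H.dt i := fun i => by simp only [dt, h]
  simp only [DtPoly, hdt]

end SimpleGraph

/-- If `v` is a support vertex of `G`, then `D_t(G,x) = D_t(G⊙v, x)`, where `G⊙v` is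
obtained from `G` by deleting every edge both of whose endpoints lie in `N(v)`. -/
theorem stmt_8 {V : Type*} [Fintype V] (G : SimpleGraph V) (v : V)
    (hv : G.IsSupportVertex v) :
    G.DtPoly = (G.deleteEdges {e : Sym2 V | ∀ x ∈ e, G.Adj v x}).DtPoly :=
  SimpleGraph.dtPoly_congr fun _ => hv.isTDS_deleteEdges_adj_iff.symm
end

section
/- Let G be a finite simple graph of order n. If the set of distinct complex roots of the total domination polynomial D_t(G,x) is exactly {−1, 0}, then G has at least two support vertices. -/
open Polynomial

/-! Once some total dominating set exists, `D_t(G, x)` is monic of degree `n`, so if its only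
roots are `0` and `-1` then `D_t(G, x) = xᵃ (x + 1)ᵇ` with `a + b = n`. No set of at most one
vertex is total dominating, so `x²` divides `D_t(G, x)` and `a ≥ 2`. The coefficient of `xⁿ⁻¹`
is `b`, while the total dominating sets of size `n - 1` are exactly the sets `V \ {v}` with `v`
not a support vertex. Hence `G` has `n - b = a ≥ 2` support vertices. -/

namespace Polynomial

section XPowMulXAddOnePow

variable {R : Type*} [CommSemiring R] (a b : ℕ)

theorem isMonicOfDegree_X_pow_mul_X_add_one_pow [Nontrivial R] :
    IsMonicOfDegree (X ^ a * (X + 1) ^ b : R[X]) (a + b) := by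
  simpa using (isMonicOfDegree_X_pow R a).mul ((isMonicOfDegree_X_add_one (1 : R)).pow b)

theorem nextCoeff_X_pow_mul_X_add_one_pow [Nontrivial R] :
    (X ^ a * (X + 1) ^ b : R[X]).nextCoeff = b := by
  have hX : (X : R[X]).nextCoeff = 0 := by simpa using nextCoeff_X_add_C (0 : R)
  have hX1 : (X + 1 : R[X]).nextCoeff = 1 := by simpa using nextCoeff_X_add_C (1 : R)
  have hm : (X + 1 : R[X]).Monic := by simpa using monic_X_add_C (1 : R)
  rw [(monic_X_pow a).nextCoeff_mul (hm.pow b), monic_X.nextCoeff_pow, hm.nextCoeff_pow, hX, hX1]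
  simp

theorem coeff_X_pow_mul_X_add_one_pow_self : (X ^ a * (X + 1) ^ b : R[X]).coeff a = 1 := by
  simp [coeff_X_pow_mul', coeff_zero_eq_eval_zero]

end XPowMulXAddOnePow

theorem eq_X_pow_mul_X_add_one_pow_of_roots {R : Type*} [CommRing R] [IsDomain R] {p : R[X]}
    (hsplit : p.Splits) (hmonic : p.Monic) (hroots : ∀ z, p.IsRoot z → z = 0 ∨ z = -1) :
    p = X ^ p.rootMultiplicity 0 * (X + 1) ^ p.rootMultiplicity (-1) := by
  classical
  have hsub : p.roots.toFinset ⊆ {0, -1} := fun z hz => by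
    simpa using hroots z (isRoot_of_mem_roots (Multiset.mem_toFinset.mp hz))
  conv_lhs =>
    rw [hsplit.eq_prod_roots_of_monic hmonic, Finset.prod_multiset_map_count,
      Finset.prod_subset hsub fun z _ hz => by
        rw [Multiset.count_eq_zero_of_notMem (by simpa using hz), pow_zero],
      Finset.prod_pair (neg_ne_zero.mpr one_ne_zero).symm]
  simp

end Polynomial

namespace SimpleGraph

theorem IsTDS.mono_s14 {V : Type*} {G : SimpleGraph V} {D D' : Finset V} (hD : G.IsTDS D)
    (h : D ⊆ D') : G.IsTDS D' :=
  fun v => (hD v).imp fun _ hu => ⟨h hu.1, hu.2⟩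

variable {V : Type*} [Fintype V] (G : SimpleGraph V)

theorem dt_one : G.dt 1 = 0 := by
  rw [dt, Set.ncard_eq_zero, Set.eq_empty_iff_forall_notMem]
  rintro D ⟨hD, hT⟩
  obtain ⟨v, rfl⟩ := Finset.card_eq_one.mp hD
  obtain ⟨u, hu, hvu⟩ := hT v
  rw [Finset.mem_singleton] at hu
  exact G.loopless.irrefl v (hu ▸ hvu)

theorem dt_card_of_isTDS_univ (hG : G.IsTDS Finset.univ) : G.dt (Fintype.card V) = 1 := by
  rw [dt, Set.ncard_eq_one]
  exact ⟨Finset.univ, Set.eq_singleton_iff_unique_mem.mpr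
    ⟨⟨Finset.card_univ, hG⟩, fun D hD => Finset.card_eq_iff_eq_univ D |>.mp hD.1⟩⟩

theorem dt_eq_zero_of_not_isTDS_univ (hG : ¬ G.IsTDS Finset.univ) (i : ℕ) : G.dt i = 0 := by
  rw [dt, Set.ncard_eq_zero, Set.eq_empty_iff_forall_notMem]
  exact fun D hD => hG (hD.2.mono_s14 D.subset_univ)

theorem coeff_DtPoly (k : ℕ) :
    G.DtPoly.coeff k = if k ∈ Finset.Icc 1 (Fintype.card V) then (G.dt k : ℂ) else 0 := by
  classical
  simp only [DtPoly, finsetSum_coeff, coeff_C_mul, coeff_X_pow, mul_ite, mul_one, mul_zero,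
    Finset.sum_ite_eq]

theorem coeff_DtPoly_zero : G.DtPoly.coeff 0 = 0 := by
  simp [coeff_DtPoly]

theorem coeff_DtPoly_one : G.DtPoly.coeff 1 = 0 := by
  simp [coeff_DtPoly, dt_one]

theorem natDegree_DtPoly_le : G.DtPoly.natDegree ≤ Fintype.card V :=
  natDegree_sum_le_of_forall_le _ _ fun i hi =>
    (natDegree_C_mul_le _ _).trans ((natDegree_X_pow_le i).trans (Finset.mem_Icc.mp hi).2)

section DtPolyNeZero

variable {G} (hG : G.DtPoly ≠ 0)
include hG

theorem isTDS_univ_of_DtPoly_ne_zero : G.IsTDS Finset.univ := by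
  by_contra hT
  exact hG (Finset.sum_eq_zero fun i _ => by simp [G.dt_eq_zero_of_not_isTDS_univ hT i])

theorem coeff_DtPoly_card : G.DtPoly.coeff (Fintype.card V) = 1 := by
  have hV : 1 ≤ Fintype.card V := by
    by_contra! hV
    exact hG (by simp [DtPoly, Finset.Icc_eq_empty_of_lt hV])
  simp [coeff_DtPoly, hV, G.dt_card_of_isTDS_univ (isTDS_univ_of_DtPoly_ne_zero hG)]

theorem isMonicOfDegree_DtPoly : IsMonicOfDegree G.DtPoly (Fintype.card V) :=
  (isMonicOfDegree_iff _ _).mpr ⟨G.natDegree_DtPoly_le, coeff_DtPoly_card hG⟩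

theorem nextCoeff_DtPoly (hV : 2 ≤ Fintype.card V) :
    G.DtPoly.nextCoeff = G.dt (Fintype.card V - 1) := by
  rw [nextCoeff_of_natDegree_pos ((isMonicOfDegree_DtPoly hG).natDegree_eq ▸ by omega),
    (isMonicOfDegree_DtPoly hG).natDegree_eq,
    coeff_DtPoly, if_pos (Finset.mem_Icc.mpr (by omega))]

end DtPolyNeZero

theorem isTDS_compl_singleton_iff [DecidableEq V] (hG : G.IsTDS Finset.univ) (v : V) :
    G.IsTDS {v}ᶜ ↔ ¬ G.IsSupportVertex v := by
  constructor
  · rintro hT ⟨l, -, hl⟩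
    obtain ⟨u, hu, hlu⟩ := hT l
    have hu' : u ∈ G.neighborSet l := hlu
    rw [hl] at hu'
    exact Finset.mem_compl.mp hu (Finset.mem_singleton.mpr hu')
  · intro hv u
    by_contra! hu
    have hnbr : ∀ w, G.Adj u w → w = v := fun w huw => by
      by_contra hwv
      exact hu w (by simpa using hwv) huw
    obtain ⟨w, -, huw⟩ := hG u
    obtain rfl := hnbr w huw
    exact hv ⟨u, huw.symm, Set.eq_singleton_iff_unique_mem.mpr ⟨huw, hnbr⟩⟩

theorem dt_card_sub_one [Nonempty V] (hG : G.IsTDS Finset.univ) :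
    G.dt (Fintype.card V - 1) = Set.ncard {v | ¬ G.IsSupportVertex v} := by
  classical
  have hsets : {D : Finset V | D.card = Fintype.card V - 1 ∧ G.IsTDS D} =
      (fun v => ({v}ᶜ : Finset V)) '' {v | ¬ G.IsSupportVertex v} := by
    ext D
    simp only [Set.mem_ofPred_eq, Set.mem_image, ← G.isTDS_compl_singleton_iff hG]
    constructor
    · rintro ⟨hD, hT⟩
      have hDc : Dᶜ.card = 1 := by
        have := Fintype.card_pos (α := V)
        rw [Finset.card_compl, hD]
        omega
      obtain ⟨v, hv⟩ := Finset.card_eq_one.mp hDc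
      rw [← compl_compl D, hv] at hT ⊢
      exact ⟨v, hT, rfl⟩
    · rintro ⟨v, hT, rfl⟩
      exact ⟨by rw [Finset.card_compl, Finset.card_singleton], hT⟩
  rw [dt, hsets]
  exact Set.ncard_image_of_injective _ (compl_injective.comp Finset.singleton_injective)

end SimpleGraph

/-- If the set of distinct complex roots of `D_t(G,x)` is exactly `{-1, 0}`, then `G` has
at least two support vertices. -/
theorem stmt_14 {V : Type*} [Fintype V] (G : SimpleGraph V)
    (h : {z : ℂ | G.DtPoly.IsRoot z} = {-1, 0}) :
    2 ≤ Set.ncard {w | G.IsSupportVertex w} := by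
  have hroots : ∀ z, G.DtPoly.IsRoot z → z = 0 ∨ z = -1 := fun z hz =>
    (show z ∈ ({-1, 0} : Set ℂ) from h ▸ hz).symm
  have hp0 : G.DtPoly ≠ 0 := fun h0 =>
    absurd (hroots 1 (by simp [h0])) (by norm_num)
  set a := G.DtPoly.rootMultiplicity 0
  set b := G.DtPoly.rootMultiplicity (-1)
  have hmonic := G.isMonicOfDegree_DtPoly hp0
  have hfac : G.DtPoly = X ^ a * (X + 1) ^ b :=
    eq_X_pow_mul_X_add_one_pow_of_roots (IsAlgClosed.splits _) hmonic.monic hroots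
  have hdeg : Fintype.card V = a + b := by
    rw [← hmonic.natDegree_eq, hfac, (isMonicOfDegree_X_pow_mul_X_add_one_pow a b).natDegree_eq]
  have ha : 2 ≤ a := by
    have hcoeff : G.DtPoly.coeff a = 1 := by rw [hfac, coeff_X_pow_mul_X_add_one_pow_self]
    have ha0 : a ≠ 0 := fun ha0 => by simp [ha0, G.coeff_DtPoly_zero] at hcoeff
    have ha1 : a ≠ 1 := fun ha1 => by simp [ha1, G.coeff_DtPoly_one] at hcoeff
    omega
  have hb : G.dt (Fintype.card V - 1) = b := by
    have := G.nextCoeff_DtPoly hp0 (by omega)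
    rw [hfac, nextCoeff_X_pow_mul_X_add_one_pow] at this
    exact_mod_cast this.symm
  have : Nonempty V := Fintype.card_pos_iff.mp (by omega)
  have hcount := Set.ncard_add_ncard_compl {w | G.IsSupportVertex w}
  rw [Set.compl_ofPred, ← G.dt_card_sub_one (G.isTDS_univ_of_DtPoly_ne_zero hp0), hb,
    Nat.card_eq_fintype_card] at hcount
  omega
end
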